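/- arXiv:2201.01558 — 6 statements merged into one kernel-verified Lean document; each statement's English description precedes it below -/
import Mathlib

section
/- Let S ⊂ ℤ^n be a finite subset and let G be a finite abelian group with |G| = |S|. Suppose S splits G with splitting sequence s = (s_1,…,s_n) ∈ G^n. Define the group homomorphism φ : ℤ^n → G by φ(x) = Σ_{i=1}^n x_i s_i and let Λ = ker φ. Then Λ is an additive subgroup of ℤ^n and the translates v + S, for v ∈ Λ, are pairwise disjoint and cover ℤ^n; that is, Λ is a lattice tiling of ℤ^n by S. -/
/-- The set `A ⊆ ℤ^n` splits the abelian group `G` with splitting sequence `s`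
if the map `a ↦ Σ aᵢ sᵢ` is injective on `A`. -/
def Splits {n : ℕ} {G : Type*} [AddCommGroup G] (A : Set (Fin n → ℤ)) (s : Fin n → G) : Prop :=
  Set.InjOn (fun a => ∑ i, a i • s i) A

/-- `Λ` is a lattice tiling of `ℤ^n` by `S`: the translates `v + S`, `v ∈ Λ`,
are pairwise disjoint and cover `ℤ^n`. -/
def IsLatticeTiling {n : ℕ} (Λ : AddSubgroup (Fin n → ℤ)) (S : Set (Fin n → ℤ)) : Prop :=
  (∀ v ∈ Λ, ∀ w ∈ Λ, v ≠ w → Disjoint ((v + ·) '' S) ((w + ·) '' S)) ∧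
  ⋃ v ∈ (Λ : Set (Fin n → ℤ)), (v + ·) '' S = Set.univ

/-- The homomorphism `φ : ℤ^n → G`, `φ(x) = Σ xᵢ sᵢ`. -/
def splitMap {n : ℕ} {G : Type*} [AddCommGroup G] (s : Fin n → G) : (Fin n → ℤ) →+ G :=
  AddMonoidHom.mk' (fun x => ∑ i, x i • s i) (fun a b => by
    simp [add_smul, Finset.sum_add_distrib])

/-! A finite set `S` on which `φ` is injective and whose size is `|G|` maps onto `G`, so it is a
set of representatives for the cosets of `Λ = ker φ`; the translates of `S` by `Λ` are then
exactly a partition of `ℤ^n`: `v + a = w + b` forces `φ a = φ b`, hence `a = b` and `v = w`,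
and every `x` is `(x - a) + a` for the `a ∈ S` with `φ a = φ x`. -/

theorem Set.InjOn.image_eq_univ_of_card_eq {α β : Type*} [Finite β] {f : α → β} {S : Set α}
    (hinj : Set.InjOn f S) (hcard : Nat.card β = Nat.card S) : f '' S = Set.univ :=
  Set.eq_of_subset_of_ncard_le (Set.subset_univ _) <| by
    rw [Set.ncard_univ, hinj.ncard_image, hcard, Nat.card_coe_set_eq]

section KernelTranslates

variable {A B : Type*} [AddGroup A] [AddGroup B] (φ : A →+ B) {S : Set A}

theorem AddMonoidHom.disjoint_ker_translates_of_injOn (hinj : Set.InjOn φ S)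
    {v w : A} (hv : v ∈ φ.ker) (hw : w ∈ φ.ker) (hvw : v ≠ w) :
    Disjoint ((v + ·) '' S) ((w + ·) '' S) := by
  rw [Set.disjoint_left]
  rintro _ ⟨a, ha, rfl⟩ ⟨b, hb, hba⟩
  have hφ : φ b = φ a := by
    simpa [AddMonoidHom.mem_ker.mp hv, AddMonoidHom.mem_ker.mp hw] using congrArg φ hba
  obtain rfl := hinj hb ha hφ
  exact hvw (add_right_cancel hba).symm

theorem AddMonoidHom.iUnion_ker_translates_eq_univ (himg : φ '' S = Set.univ) :
    ⋃ v ∈ (φ.ker : Set A), (v + ·) '' S = Set.univ := by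
  refine Set.eq_univ_of_forall fun x => ?_
  obtain ⟨a, ha, hφa⟩ : φ x ∈ φ '' S := himg ▸ Set.mem_univ _
  refine Set.mem_biUnion (x := x - a) ?_ ⟨a, ha, sub_add_cancel x a⟩
  rw [SetLike.mem_coe, AddMonoidHom.mem_ker, map_sub, hφa, sub_self]

end KernelTranslates

theorem isLatticeTiling_ker_of_injOn_of_image_eq_univ {n : ℕ} {G : Type*} [AddGroup G]
    (φ : (Fin n → ℤ) →+ G) {S : Set (Fin n → ℤ)} (hinj : Set.InjOn φ S)
    (himg : φ '' S = Set.univ) : IsLatticeTiling φ.ker S :=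
  ⟨fun _ hv _ hw hvw => φ.disjoint_ker_translates_of_injOn hinj hv hw hvw,
    φ.iUnion_ker_translates_eq_univ himg⟩

theorem stmt0_general {n : ℕ} {G : Type*} [AddCommGroup G] [Fintype G]
    (S : Set (Fin n → ℤ))
    (hcard : Fintype.card G = Nat.card S)
    (s : Fin n → G) (hsplit : Splits S s) :
    IsLatticeTiling (splitMap s).ker S := by
  have hinj : Set.InjOn (splitMap s) S := hsplit
  exact isLatticeTiling_ker_of_injOn_of_image_eq_univ _ hinj
    (hinj.image_eq_univ_of_card_eq (Nat.card_eq_fintype_card.trans hcard))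

/-- If a finite set `S ⊆ ℤ^n` splits a finite abelian group `G` with `|G| = |S|`
via the splitting sequence `s`, then the kernel `Λ` of `φ(x) = Σ xᵢ sᵢ`
is a lattice tiling of `ℤ^n` by `S`. -/
theorem stmt0 {n : ℕ} {G : Type*} [AddCommGroup G] [Fintype G]
    (S : Set (Fin n → ℤ)) (hfin : S.Finite)
    (hcard : Fintype.card G = Nat.card S)
    (s : Fin n → G) (hsplit : Splits S s) :
    IsLatticeTiling (splitMap s).ker S :=
  stmt0_general S hcard s hsplit
end

section
/- Let Λ ⊆ ℤ^n be an additive subgroup that is a lattice tiling of ℤ^n by a finite set S ⊂ ℤ^n, and suppose the quotient group G = ℤ^n/Λ is finite. Let φ : ℤ^n → G be the quotient homomorphism and set s = (φ(e_1), φ(e_2), …, φ(e_n)), where e_i is the i-th standard unit vector of ℤ^n. Then S splits G with splitting sequence s. -/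
lemma sum_zsmul_map_single {ι G : Type*} [Fintype ι] [DecidableEq ι] [AddCommGroup G]
    (f : (ι → ℤ) →+ G) (a : ι → ℤ) : ∑ i, a i • f (Pi.single i 1) = f a := by
  simp_rw [← map_zsmul, ← map_sum, ← Pi.single_smul, smul_eq_mul, mul_one, Finset.univ_sum_single]

lemma sum_zsmul_mk_single {ι : Type*} [Fintype ι] [DecidableEq ι] (Λ : AddSubgroup (ι → ℤ))
    (a : ι → ℤ) :
    ∑ i, a i • (QuotientAddGroup.mk (Pi.single i (1 : ℤ)) : (ι → ℤ) ⧸ Λ) = QuotientAddGroup.mk a :=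
  sum_zsmul_map_single (QuotientAddGroup.mk' Λ) a

lemma injOn_mk_of_pairwise_disjoint_translates {M : Type*} [AddCommGroup M] {Λ : AddSubgroup M}
    {S : Set M} (hdisj : ∀ v ∈ Λ, ∀ w ∈ Λ, v ≠ w → Disjoint ((v + ·) '' S) ((w + ·) '' S)) :
    S.InjOn (QuotientAddGroup.mk : M → M ⧸ Λ) := by
  intro a ha b hb hab
  by_contra hne
  have hmem : a - b ∈ Λ := by rwa [QuotientAddGroup.eq_iff_sub_mem] at hab
  have ha_shift : a ∈ ((a - b) + ·) '' S := ⟨b, hb, sub_add_cancel a b⟩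
  have ha_self : a ∈ ((0 : M) + ·) '' S := ⟨a, ha, zero_add a⟩
  exact (hdisj _ hmem 0 Λ.zero_mem (sub_ne_zero.mpr hne)).ne_of_mem ha_shift ha_self rfl

theorem stmt1_general {n : ℕ} (Λ : AddSubgroup (Fin n → ℤ)) (S : Set (Fin n → ℤ))
    (htile : IsLatticeTiling Λ S) :
    Splits S (fun i => (QuotientAddGroup.mk (Pi.single i (1 : ℤ)) : (Fin n → ℤ) ⧸ Λ)) := by
  intro a ha b hb hab
  simp only [sum_zsmul_mk_single] at hab
  exact injOn_mk_of_pairwise_disjoint_translates htile.1 ha hb hab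

/-- If `Λ ⊆ ℤ^n` is a lattice tiling of `ℤ^n` by a finite set `S`, and the quotient
`G = ℤ^n/Λ` is finite, then `S` splits `G` with the splitting sequence
`s = (φ(e₁),…,φ(eₙ))`, where `φ` is the quotient homomorphism and `eᵢ` the unit vectors. -/
theorem stmt1 {n : ℕ} (Λ : AddSubgroup (Fin n → ℤ)) (S : Set (Fin n → ℤ))
    (hfin : S.Finite) (hG : Finite ((Fin n → ℤ) ⧸ Λ))
    (htile : IsLatticeTiling Λ S) :
    Splits S (fun i => (QuotientAddGroup.mk (Pi.single i (1 : ℤ)) : (Fin n → ℤ) ⧸ Λ)) :=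
  stmt1_general Λ S htile
end

section
/- For every integer n ≥ 2, there exists an additive subgroup Λ of ℤ^n that is a lattice tiling of ℤ^n by the non-cyclic error ball E(n,2,1,0); equivalently, there exists a perfect lattice code in ℤ^n correcting a single non-cyclic burst of length 2 of (1,0)-limited-magnitude errors. -/
/-!
Take `Λ` to be the kernel of a syndrome map `x ↦ ∑ xᵢ • wᵢ` into a finite abelian group `G` of
order `2n`, the size of `E(n,2,1,0)`: the ball tiles by `Λ` as soon as its `2n` elements have
distinct syndromes. Choose `g ∈ G` of order `n`, `h ∉ ⟨g⟩`, and `wᵢ = h + τᵢ • g`. If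
`2h = (1 - δ) • g` and `τ_{m-1} + τ_m = m - 1 + δ`, the burst on positions `m - 1, m` has syndrome
`m • g`, so the zero vector and the bursts of length two fill `⟨g⟩`, while the single errors fill
`h + ⟨g⟩` exactly when `τ` is a bijection onto `ℤ/n`. With `τ` alternating between `t + k` and
`k + δ - t`, this holds when `2t + ⌈n/2⌉ ≡ δ (mod n)`, which is solvable in `t` if `n` is odd or
`⌈n/2⌉ - δ` is even. So take `G = ℤ/2n`, `g = 2`, `h = 1`, `δ = 0` when `4 ∣ n`, and
`G = ℤ/n × ℤ/2`, `g = (1,0)`, `h = (0,1)`, `δ = 1` otherwise.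
-/

/-- The non-cyclic error ball `E(n,b,k₊,k₋)`: vectors `e ∈ [−k₋,k₊]^n` (indices `0,…,n−1`
corresponding to coordinates `1,…,n`) such that for some `i`, all entries outside the
window `[i, i+b−1]` vanish. -/
def nonCyclicBall (n b kp km : ℕ) : Set (Fin n → ℤ) :=
  {e | (∀ ℓ, -(km : ℤ) ≤ e ℓ ∧ e ℓ ≤ (kp : ℤ)) ∧
    ∃ i : Fin n, ∀ ℓ : Fin n, (ℓ.val < i.val ∨ i.val + b ≤ ℓ.val) → e ℓ = 0}

/-- The cyclic error ball `E°(n,b,k₊,k₋)`: vectors `e ∈ [−k₋,k₊]^n` such that for some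
`i ∈ ℤ_n`, all entries outside the cyclic window `{i, i+1, …, i+b−1}` vanish. -/
def cyclicBall (n b kp km : ℕ) : Set (Fin n → ℤ) :=
  {e | (∀ ℓ, -(km : ℤ) ≤ e ℓ ∧ e ℓ ≤ (kp : ℤ)) ∧
    ∃ i : ZMod n, ∀ ℓ : Fin n,
      (∀ j : ℕ, j < b → ((ℓ.val : ZMod n) ≠ i + (j : ZMod n))) → e ℓ = 0}
open Function

variable {n : ℕ}

-- `inl i` is the single error at `i`, `inr m` the burst at positions `m - 1, m`; `inr 0` is `0`.
def burst : Fin n ⊕ Fin n → Fin n → ℤ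
  | .inl i => Pi.single i 1
  | .inr m => if h : (m : ℕ) = 0 then 0 else Pi.single ⟨m - 1, by omega⟩ 1 + Pi.single m 1

lemma burst_inl_apply (i ℓ : Fin n) : burst (.inl i) ℓ = if (ℓ : ℕ) = i then 1 else 0 := by
  simp [burst, Pi.single_apply, Fin.ext_iff]

lemma burst_inr_apply (m ℓ : Fin n) :
    burst (.inr m) ℓ = if (m : ℕ) ≠ 0 ∧ ((ℓ : ℕ) + 1 = m ∨ (ℓ : ℕ) = m) then 1 else 0 := by
  by_cases hm : (m : ℕ) = 0
  · simp [burst, hm]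
  · simp only [burst, hm, dite_false, Pi.add_apply, Pi.single_apply, Fin.ext_iff]
    split_ifs <;> omega

lemma burst_mem_nonCyclicBall (p : Fin n ⊕ Fin n) : burst p ∈ nonCyclicBall n 2 1 0 := by
  rcases p with i | m
  · refine ⟨fun ℓ => ?_, i, fun ℓ hℓ => ?_⟩ <;> rw [burst_inl_apply] <;> split_ifs <;> omega
  · refine ⟨fun ℓ => ?_, ⟨m - 1, by omega⟩, fun ℓ hℓ => ?_⟩
    · rw [burst_inr_apply]; split_ifs <;> omega
    · rw [burst_inr_apply]; simp only at hℓ; split_ifs <;> omega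

lemma exists_burst_eq {e : Fin n → ℤ} (he : e ∈ nonCyclicBall n 2 1 0) : ∃ p, burst p = e := by
  obtain ⟨hbound, i, hsupp⟩ := he
  have hvals : ∀ ℓ, e ℓ = 0 ∨ e ℓ = 1 := fun ℓ => by have := hbound ℓ; push_cast at this; omega
  set b : ℤ := if h : (i : ℕ) + 1 < n then e ⟨i + 1, h⟩ else 0 with hb
  have hwindow : ∀ ℓ : Fin n,
      e ℓ = if (ℓ : ℕ) = i then e i else if (ℓ : ℕ) = i + 1 then b else 0 := by
    intro ℓ
    split_ifs with h1 h2
    · rw [Fin.ext h1]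
    · rw [hb, dif_pos (show (i : ℕ) + 1 < n by omega)]; congr; ext; exact h2
    · exact hsupp ℓ (by omega)
  have hb01 : b = 0 ∨ (b = 1 ∧ (i : ℕ) + 1 < n) := by
    rw [hb]; split_ifs with h
    · rcases hvals (⟨i + 1, h⟩ : Fin n) with h' | h' <;> simp [h', h]
    · simp
  suffices ∃ p, ∀ ℓ : Fin n,
      burst p ℓ = if (ℓ : ℕ) = i then e i else if (ℓ : ℕ) = i + 1 then b else 0 from
    this.imp fun p hp => funext fun ℓ => (hp ℓ).trans (hwindow ℓ).symm
  rcases hvals i with hi | hi <;> rcases hb01 with hb0 | ⟨hb1, hlt⟩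
  · exact ⟨.inr ⟨0, i.pos⟩, fun ℓ => by simp only [burst_inr_apply]; split_ifs <;> omega⟩
  · exact ⟨.inl ⟨i + 1, hlt⟩, fun ℓ => by simp only [burst_inl_apply]; split_ifs <;> omega⟩
  · exact ⟨.inl i, fun ℓ => by simp only [burst_inl_apply]; split_ifs <;> omega⟩
  · exact ⟨.inr ⟨i + 1, hlt⟩, fun ℓ => by simp only [burst_inr_apply]; split_ifs <;> omega⟩

lemma range_burst : Set.range (burst (n := n)) = nonCyclicBall n 2 1 0 :=
  Set.Subset.antisymm (Set.range_subset_iff.2 burst_mem_nonCyclicBall) fun _ he =>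
    exists_burst_eq he

lemma isLatticeTiling_ker_of_bijOn {G : Type*} [AddCommGroup G] (φ : (Fin n → ℤ) →+ G)
    {S : Set (Fin n → ℤ)} (hφ : Set.BijOn φ S Set.univ) : IsLatticeTiling φ.ker S := by
  refine ⟨fun v hv w hw hvw => Set.disjoint_left.2 ?_, Set.eq_univ_of_forall fun x => ?_⟩
  · rintro _ ⟨s, hs, rfl⟩ ⟨t, ht, hts⟩
    have hst : s = t := hφ.injOn hs ht <| by
      simpa [(AddMonoidHom.mem_ker).1 hv, (AddMonoidHom.mem_ker).1 hw] using congrArg φ hts.symm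
    subst hst
    exact hvw (add_right_cancel hts).symm
  · obtain ⟨s, hs, hφs⟩ := hφ.surjOn (Set.mem_univ (φ x))
    refine Set.mem_biUnion (x := x - s) ?_ ⟨s, hs, sub_add_cancel x s⟩
    simp [AddMonoidHom.mem_ker, hφs]

theorem isLatticeTiling_ker_linearCombination_of_injective {G : Type*} [AddCommGroup G] [Fintype G]
    (hG : Fintype.card G = 2 * n) (w : Fin n → G)
    (hw : Injective fun p => Fintype.linearCombination ℤ w (burst p)) :
    IsLatticeTiling (Fintype.linearCombination ℤ w).toAddMonoidHom.ker (nonCyclicBall n 2 1 0) := by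
  have hbij : Bijective fun p => Fintype.linearCombination ℤ w (burst p) :=
    (Fintype.bijective_iff_injective_and_card _).2 ⟨hw, by simp [hG, two_mul]⟩
  refine isLatticeTiling_ker_of_bijOn _ ⟨Set.mapsTo_univ _ _, ?_, ?_⟩ <;> rw [← range_burst]
  · rintro _ ⟨p, rfl⟩ _ ⟨q, rfl⟩ hpq
    rw [hw hpq]
  · intro g _
    obtain ⟨p, hp⟩ := hbij.2 g
    exact ⟨burst p, ⟨p, rfl⟩, hp⟩

section CosetWeights

variable {G : Type*} [AddCommGroup G] (g h : G) (δ t : ℤ)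

def cosetIndex (i : ℕ) : ℤ := if i % 2 = 0 then t + (i / 2 : ℕ) else (i / 2 : ℕ) + δ - t

lemma cosetIndex_add_cosetIndex_succ (i : ℕ) :
    cosetIndex δ t i + cosetIndex δ t (i + 1) = i + δ := by
  unfold cosetIndex
  split_ifs <;> omega

variable {δ t} in
lemma eq_of_dvd_cosetIndex_sub {i j : ℕ} (ht : (n : ℤ) ∣ 2 * t + (n + 1) / 2 - δ) (hi : i < n)
    (hj : j < n) (h : (n : ℤ) ∣ cosetIndex δ t i - cosetIndex δ t j) : i = j := by
  have small : ∀ d : ℤ, (n : ℤ) ∣ d → -n < d → d < n → d = 0 :=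
    fun d hd h₁ h₂ => Int.eq_zero_of_abs_lt_dvd hd (abs_lt.2 ⟨h₁, h₂⟩)
  unfold cosetIndex at h
  split_ifs at h
  · have := small _ h (by omega) (by omega); omega
  · have := small _ (dvd_sub h ht) (by omega) (by omega); omega
  · have := small _ (dvd_add h ht) (by omega) (by omega); omega
  · have := small _ h (by omega) (by omega); omega

def cosetWeight (i : Fin n) : G := h + cosetIndex δ t i • g

lemma linearCombination_burst_cosetWeight (h2 : 2 • h = (1 - δ) • g) (p : Fin n ⊕ Fin n) :
    Fintype.linearCombination ℤ (cosetWeight g h δ t) (burst p) =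
      Sum.elim (cosetWeight g h δ t) (fun m : Fin n => (m : ℕ) • g) p := by
  rcases p with i | m
  · simp [burst, Fintype.linearCombination_apply_single]
  by_cases hm : (m : ℕ) = 0
  · simp [burst, hm]
  have hsum := cosetIndex_add_cosetIndex_succ δ t (m - 1)
  rw [Nat.sub_add_cancel (by omega)] at hsum
  simp only [burst, hm, dite_false, map_add, Fintype.linearCombination_apply_single, one_smul,
    cosetWeight, Sum.elim_inr]
  calc h + cosetIndex δ t (m - 1) • g + (h + cosetIndex δ t m • g)
      = 2 • h + (cosetIndex δ t (m - 1) + cosetIndex δ t m) • g := by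
        rw [add_zsmul, two_nsmul]; abel
    _ = (m : ℕ) • g := by
        rw [h2, hsum, ← add_zsmul, ← natCast_zsmul]; congr 1; omega

variable {g h δ t} in
theorem injective_linearCombination_burst_cosetWeight (hg : addOrderOf g = n)
    (hh : h ∉ AddSubgroup.zmultiples g) (h2 : 2 • h = (1 - δ) • g)
    (ht : (n : ℤ) ∣ 2 * t + (n + 1) / 2 - δ) :
    Injective fun p => Fintype.linearCombination ℤ (cosetWeight (n := n) g h δ t) (burst p) := by
  simp only [linearCombination_burst_cosetWeight g h δ t h2]
  refine Injective.sumElim (fun i j hij => Fin.ext ?_) (fun m m' hmm => Fin.ext ?_) ?_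
  · refine eq_of_dvd_cosetIndex_sub ht i.2 j.2 ?_
    have hsub : (cosetIndex δ t i - cosetIndex δ t j) • g = 0 := by
      rw [sub_smul, sub_eq_zero]
      exact add_left_cancel hij
    simpa [hg] using addOrderOf_dvd_iff_zsmul_eq_zero.2 hsub
  · exact (nsmul_eq_nsmul_iff_modEq.1 hmm).eq_of_lt_of_lt (hg ▸ m.2) (hg ▸ m'.2)
  · intro i m him
    refine hh (AddSubgroup.mem_zmultiples_iff.2 ⟨(m : ℕ) - cosetIndex δ t i, ?_⟩)
    rw [sub_zsmul, natCast_zsmul, ← him, cosetWeight]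
    abel

end CosetWeights

lemma exists_dvd_two_mul_add {x : ℤ} (h : n % 2 = 1 ∨ x % 2 = 0) :
    ∃ t : ℤ, (n : ℤ) ∣ 2 * t + x := by
  rcases Int.emod_two_eq_zero_or_one x with hx | hx
  · exact ⟨-(x / 2), by rw [show 2 * -(x / 2) + x = 0 by omega]; exact dvd_zero _⟩
  · exact ⟨(n - x) / 2, ⟨1, by omega⟩⟩

theorem exists_isLatticeTiling_of_cosetWeight {G : Type*} [AddCommGroup G] [Fintype G]
    (hG : Fintype.card G = 2 * n) {g h : G} {δ : ℤ} (hg : addOrderOf g = n)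
    (hh : h ∉ AddSubgroup.zmultiples g) (h2 : 2 • h = (1 - δ) • g)
    (hδ : n % 2 = 1 ∨ (((n : ℤ) + 1) / 2 - δ) % 2 = 0) :
    ∃ Λ : AddSubgroup (Fin n → ℤ), IsLatticeTiling Λ (nonCyclicBall n 2 1 0) := by
  obtain ⟨t, ht⟩ := exists_dvd_two_mul_add hδ
  rw [← add_sub_assoc] at ht
  exact ⟨_, isLatticeTiling_ker_linearCombination_of_injective hG _
    (injective_linearCombination_burst_cosetWeight hg hh h2 ht)⟩

lemma addOrderOf_two_zmod_two_mul (hn : n ≠ 0) : addOrderOf (2 : ZMod (2 * n)) = n := by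
  have := ZMod.addOrderOf_coe 2 (n := 2 * n) (by omega)
  simp_all [Nat.gcd_mul_right_left]

lemma one_notMem_zmultiples_two_zmod_two_mul : (1 : ZMod (2 * n)) ∉ AddSubgroup.zmultiples 2 := by
  rintro ⟨k, hk⟩
  have h2 := congrArg (ZMod.castHom (dvd_mul_right 2 n) (ZMod 2)) hk
  rw [map_zsmul, map_ofNat, map_one, show (2 : ZMod 2) = 0 from rfl, smul_zero] at h2
  exact zero_ne_one h2

/-- For every `n ≥ 2`, there is a lattice tiling of `ℤ^n` by the non-cyclic error ball
`E(n,2,1,0)`, i.e., a perfect lattice code correcting a single non-cyclic `2`-burst of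
`(1,0)`-limited-magnitude errors. -/
theorem stmt2 (n : ℕ) (hn : 2 ≤ n) :
    ∃ Λ : AddSubgroup (Fin n → ℤ), IsLatticeTiling Λ (nonCyclicBall n 2 1 0) := by
  have : NeZero n := ⟨by omega⟩
  by_cases h4 : n % 4 = 0
  · have : NeZero (2 * n) := ⟨by omega⟩
    exact exists_isLatticeTiling_of_cosetWeight (g := (2 : ZMod (2 * n))) (h := 1) (δ := 0)
      (ZMod.card _) (addOrderOf_two_zmod_two_mul (by omega)) one_notMem_zmultiples_two_zmod_two_mul
      (by simp) (Or.inr (by omega))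
  · exact exists_isLatticeTiling_of_cosetWeight (g := ((1, 0) : ZMod n × ZMod 2)) (h := (0, 1))
      (δ := 1) (by simp [mul_comm]) (by simp [Prod.addOrderOf])
      (fun hmem => by obtain ⟨k, hk⟩ := hmem; simpa using congrArg Prod.snd hk)
      (by rw [sub_self, zero_smul, Prod.ext_iff]; exact ⟨smul_zero 2, rfl⟩) (by omega)
end

section
/- Let m ≥ 2 be an even integer and n = 2m+1. Define s ∈ (ℤ_{4m+2})^n by s_{2j+1} = m+1+2j and s_{2j+2} = 3m+3+2j (mod 4m+2) for 0 ≤ j ≤ m−1, and s_{2m+1} = 3m+1. Then the non-cyclic error ball E(n,2,1,0) splits ℤ_{4m+2} with splitting sequence s. -/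
/-!
Every element of `E(n,2,1,0)` is `0`, a unit vector `δ_t` or an adjacent pair `δ_t + δ_{t+1}`, so
its syndrome is `0`, `s_t` or `s_t + s_{t+1}`. For even `m` every `s_t` is odd, while
`s_t + s_{t+1} ≡ 2(t+1) (mod 4m+2)` is even and nonzero. The integer representatives of the
`s_t` lie in `[m+1, 5m+1]`, a window shorter than `4m+2`, so the `s_t` are distinct, and so are
the pair sums `2, 4, …, 4m`.
-/

open Function

theorem eq_zero_or_single_or_pair_of_mem_nonCyclicBall {n : ℕ} {e : Fin n → ℤ}
    (he : e ∈ nonCyclicBall n 2 1 0) :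
    e = 0 ∨ (∃ t, e = Pi.single t 1) ∨
      ∃ t t' : Fin n, t.val + 1 = t'.val ∧ e = Pi.single t 1 + Pi.single t' 1 := by
  obtain ⟨hbound, i, hwindow⟩ := he
  have hbinary : ∀ ℓ, e ℓ = 0 ∨ e ℓ = 1 := fun ℓ => by
    have := hbound ℓ
    push_cast at this
    omega
  by_cases hi : i.val + 1 < n
  · set i' : Fin n := ⟨i.val + 1, hi⟩
    have hii' : i ≠ i' := by simp [i', Fin.ext_iff]
    have hsplit : e = Pi.single i (e i) + Pi.single i' (e i') := by
      funext ℓ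
      by_cases hℓi : ℓ = i
      · subst hℓi; simp [hii']
      by_cases hℓi' : ℓ = i'
      · subst hℓi'; simp [hii'.symm]
      simp only [Pi.add_apply, Pi.single_apply, hℓi, hℓi', if_false, add_zero]
      exact hwindow ℓ (by simp only [Fin.ext_iff, i'] at hℓi hℓi'; omega)
    rcases hbinary i with h | h <;> rcases hbinary i' with h' | h' <;> rw [hsplit, h, h']
    · exact .inl (by simp)
    · exact .inr (.inl ⟨i', by simp⟩)
    · exact .inr (.inl ⟨i, by simp⟩)
    · exact .inr (.inr ⟨i, i', rfl, rfl⟩)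
  · have hsingle : e = Pi.single i (e i) := by
      funext ℓ
      by_cases hℓi : ℓ = i
      · subst hℓi; simp
      simp only [Pi.single_apply, hℓi, if_false]
      exact hwindow ℓ (by simp only [Fin.ext_iff] at hℓi; omega)
    rcases hbinary i with h0 | h1 <;> rw [hsingle]
    · exact .inl (by simp [h0])
    · exact .inr (.inl ⟨i, by rw [h1]⟩)

theorem splits_nonCyclicBall_two_one_zero {n : ℕ} {G : Type*} [AddCommGroup G]
    {s : Fin n → G} (hs : Injective s) (hs0 : ∀ t, s t ≠ 0)
    (hpair0 : ∀ t t' : Fin n, t.val + 1 = t'.val → s t + s t' ≠ 0)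
    (hpair : ∀ t t' u u' : Fin n, t.val + 1 = t'.val → u.val + 1 = u'.val →
      s t + s t' = s u + s u' → t = u)
    (hsingle_pair : ∀ t u u' : Fin n, u.val + 1 = u'.val → s t ≠ s u + s u') :
    Splits (nonCyclicBall n 2 1 0) s := by
  intro a ha b hb hab
  replace hab : Fintype.linearCombination ℤ s a = Fintype.linearCombination ℤ s b := by
    simpa only [Fintype.linearCombination_apply] using hab
  rcases eq_zero_or_single_or_pair_of_mem_nonCyclicBall ha with rfl | ⟨t, rfl⟩ | ⟨t, t', htt', rfl⟩ <;>
    rcases eq_zero_or_single_or_pair_of_mem_nonCyclicBall hb with rfl | ⟨u, rfl⟩ | ⟨u, u', huu', rfl⟩ <;>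
    simp only [map_add, map_zero, Fintype.linearCombination_apply_single, one_smul] at hab
  · rfl
  · exact absurd hab.symm (hs0 u)
  · exact absurd hab.symm (hpair0 u u' huu')
  · exact absurd hab (hs0 t)
  · rw [hs hab]
  · exact absurd hab (hsingle_pair t u u' huu')
  · exact absurd hab (hpair0 t t' htt')
  · exact absurd hab.symm (hsingle_pair u t t' htt')
  · obtain rfl := hpair t t' u u' htt' huu' hab
    obtain rfl : t' = u' := Fin.ext (by omega)
    rfl

theorem ZMod.eq_of_natCast_eq_of_lt_add {N a b : ℕ} (h : (a : ZMod N) = b) (ha : a < b + N)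
    (hb : b < a + N) : a = b :=
  ((ZMod.natCast_eq_natCast_iff a b N).1 h).eq_of_abs_lt (abs_sub_lt_iff.2 ⟨by omega, by omega⟩)

theorem ZMod.natCast_ne_natCast_of_odd_of_even {N a b : ℕ} (hN : 2 ∣ N) (ha : Odd a)
    (hb : Even b) : (a : ZMod N) ≠ b := by
  intro h
  have h2 := congrArg (ZMod.castHom hN (ZMod 2)) h
  rw [map_natCast, map_natCast, ZMod.natCast_eq_one_iff_odd.2 ha,
    ZMod.natCast_eq_zero_iff_even.2 hb] at h2
  exact one_ne_zero h2

/-- `splittingNat m t` represents the paper's `s_{t+1}`. -/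
def splittingNat (m t : ℕ) : ℕ :=
  if t % 2 = 0 then m + 1 + t else 3 * m + 2 + t

section splittingNat

variable {m t u : ℕ}

theorem odd_splittingNat (hm : Even m) : Odd (splittingNat m t) := by
  obtain ⟨r, rfl⟩ := hm
  unfold splittingNat
  split_ifs <;> rw [Nat.odd_iff] <;> omega

theorem splittingNat_add_splittingNat_succ :
    splittingNat m t + splittingNat m (t + 1) = (4 * m + 2) + 2 * (t + 1) := by
  unfold splittingNat
  split_ifs <;> omega

theorem splittingNat_lt_add (ht : t < 2 * m + 1) (hu : u < 2 * m + 1) :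
    splittingNat m t < splittingNat m u + (4 * m + 2) := by
  unfold splittingNat
  split_ifs <;> omega

theorem splittingNat_injOn : Set.InjOn (splittingNat m) (Set.Iio (2 * m + 1)) := by
  intro t ht u hu h
  simp only [Set.mem_Iio, splittingNat] at ht hu h
  split_ifs at h <;> omega

theorem natCast_splittingNat_add_succ :
    (splittingNat m t : ZMod (4 * m + 2)) + (splittingNat m (t + 1) : ZMod (4 * m + 2)) =
      (↑(2 * (t + 1)) : ZMod (4 * m + 2)) := by
  rw [← Nat.cast_add, splittingNat_add_splittingNat_succ, Nat.cast_add, ZMod.natCast_self, zero_add]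

end splittingNat

theorem splits_splittingNat {m : ℕ} (hm : Even m) :
    Splits (nonCyclicBall (2 * m + 1) 2 1 0)
      (fun t : Fin (2 * m + 1) => (splittingNat m t : ZMod (4 * m + 2))) := by
  have hN : 2 ∣ 4 * m + 2 := ⟨2 * m + 1, by ring⟩
  have hpair_sum : ∀ t t' : Fin (2 * m + 1), t.val + 1 = t'.val →
      (splittingNat m t : ZMod (4 * m + 2)) + (splittingNat m t' : ZMod (4 * m + 2)) =
        (↑(2 * (t.val + 1)) : ZMod (4 * m + 2)) ∧
        t.val + 1 < 2 * m + 1 := fun t t' htt' =>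
    ⟨htt' ▸ natCast_splittingNat_add_succ, htt' ▸ t'.isLt⟩
  apply splits_nonCyclicBall_two_one_zero
  · intro t u h
    exact Fin.ext <| splittingNat_injOn t.isLt u.isLt <|
      ZMod.eq_of_natCast_eq_of_lt_add h (splittingNat_lt_add t.isLt u.isLt)
        (splittingNat_lt_add u.isLt t.isLt)
  · intro t h
    exact ZMod.natCast_ne_natCast_of_odd_of_even hN (odd_splittingNat hm) Even.zero
      (h.trans Nat.cast_zero.symm)
  · intro t t' htt' h
    obtain ⟨hsum, ht⟩ := hpair_sum t t' htt'
    rw [hsum, ← Nat.cast_zero] at h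
    have := ZMod.eq_of_natCast_eq_of_lt_add h (by omega) (by omega)
    omega
  · intro t t' u u' htt' huu' h
    obtain ⟨hsumt, ht⟩ := hpair_sum t t' htt'
    obtain ⟨hsumu, hu⟩ := hpair_sum u u' huu'
    rw [hsumt, hsumu] at h
    have := ZMod.eq_of_natCast_eq_of_lt_add h (by omega) (by omega)
    exact Fin.ext (by omega)
  · intro t u u' huu'
    rw [(hpair_sum u u' huu').1]
    exact ZMod.natCast_ne_natCast_of_odd_of_even hN (odd_splittingNat hm) (even_two_mul _)

theorem stmt3_general (m : ℕ) (hme : Even m) :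
    Splits (nonCyclicBall (2 * m + 1) 2 1 0)
      (fun t : Fin (2 * m + 1) =>
        if t.val % 2 = 0 then ((m + 1 + t.val : ℕ) : ZMod (4 * m + 2))
        else ((3 * m + 2 + t.val : ℕ) : ZMod (4 * m + 2))) := by
  simpa only [splittingNat, Nat.cast_ite] using splits_splittingNat hme

/-- Case 1 of Theorem: for even `m ≥ 2` and `n = 2m+1`, the sequence with
`s_{2j+1} = m+1+2j`, `s_{2j+2} = 3m+3+2j` (`0 ≤ j ≤ m−1`) and `s_{2m+1} = 3m+1`
(equivalently, `s_t = m+1+t` for even `t` and `s_t = 3m+2+t` for odd `t`, `t` 0-based)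
splits `ℤ_{4m+2}` by the non-cyclic error ball `E(n,2,1,0)`. -/
theorem stmt3 (m : ℕ) (hm : 2 ≤ m) (hme : Even m) :
    Splits (nonCyclicBall (2 * m + 1) 2 1 0)
      (fun t : Fin (2 * m + 1) =>
        if t.val % 2 = 0 then ((m + 1 + t.val : ℕ) : ZMod (4 * m + 2))
        else ((3 * m + 2 + t.val : ℕ) : ZMod (4 * m + 2))) :=
  stmt3_general m hme
end

section
/- Let b ≥ 1 and k₊ ≥ k₋ ≥ 0 be integers, set e = (k₊+k₋)(k₊+k₋+1)^{b−1}, let q be a prime power with e | q−1, and let n = (q−1)/e with n ≥ 2b−1. Let α be a primitive element of 𝔽_q, and let 𝓕 be the set of polynomials c_0 + c_1 x^e + c_2 x^{2e} + ⋯ + c_{b−1} x^{(b−1)e} over 𝔽_q with (c_0,…,c_{b−1}) ∈ [−k₋,k₊]^b and c_0 ≠ 0. Suppose f(α) ≠ 0 for all f ∈ 𝓕 and that {log_α(f(α)) mod e : f ∈ 𝓕} = {0, 1, …, e−1}. Then the cyclic error ball E°(n,b,k₊,k₋) splits the additive group of 𝔽_q with splitting sequence s_α = (α^0, α^e, α^{2e},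 …, α^{(n−1)e}). -/
/-!
Write a nonzero error of the cyclic ball with its window starting at a nonzero entry `i`, with
coefficient vector `c`; its syndrome is then `α^{ei} f_c(α)` with `f_c ∈ 𝓕`. Since `𝓕` has exactly
`e` elements whose discrete logarithms cover all residues modulo `e`, the residue modulo `e` of
`log_α` is injective on `{f(α) : f ∈ 𝓕}`. So the syndrome `α^{ei} f_c(α)` determines `c` (through
its logarithm modulo `e`), and then `α^{ei}` determines `i` modulo `n = ord(α^e)`.
-/

open Finset

lemma eq_and_modEq_of_pow_mul_eq_pow_mul {M ι : Type*} [CommMonoid M] {α : M} {e n : ℕ}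
    [NeZero e] [NeZero n] (hα : orderOf α = e * n) {P : ι → M} {S : Finset ι} (hS : #S ≤ e)
    (hlog : ∀ r < e, ∃ c ∈ S, ∃ a, a % e = r ∧ α ^ a = P c)
    {c d : ι} (hc : c ∈ S) (hd : d ∈ S) {i j : ℕ}
    (h : α ^ (e * i) * P c = α ^ (e * j) * P d) : c = d ∧ i ≡ j [MOD n] := by
  have hfin : IsOfFinOrder α := orderOf_pos_iff.mp (hα ▸ Nat.pos_of_neZero _)
  choose f hfS a ha hfa using fun r : Fin e => hlog r r.isLt
  have hres {r r' : Fin e} (h : a r ≡ a r' [MOD e]) : r = r' := by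
    rw [Nat.ModEq, ha, ha] at h
    exact Fin.ext h
  have hinj : Function.Injective f := fun r r' hrr' =>
    hres ((hα ▸ hfin.pow_eq_pow_iff_modEq.mp (by rw [hfa, hrr', hfa])).of_mul_right n)
  -- By counting, `f` is onto `S`; in particular every `P c` with `c ∈ S` has a logarithm.
  have hsurj : ∀ c ∈ S, ∃ r, c = f r := fun c hc => by
    obtain ⟨r, -, hr⟩ := surj_on_of_inj_on_of_card_le (s := univ) (fun r _ => f r)
      (fun r _ => hfS r) (fun r r' _ _ h => hinj h) (by simpa using hS) c hc
    exact ⟨r, hr⟩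
  obtain ⟨r, rfl⟩ := hsurj c hc
  obtain ⟨r', rfl⟩ := hsurj d hd
  rw [← hfa r, ← hfa r', ← pow_add, ← pow_add, hfin.pow_eq_pow_iff_modEq, hα] at h
  obtain rfl : r = r' := by
    have := h.of_mul_right n
    rw [Nat.ModEq, Nat.mul_add_mod, Nat.mul_add_mod] at this
    exact hres this
  exact ⟨rfl, Nat.ModEq.mul_left_cancel' (NeZero.ne e) (Nat.ModEq.add_right_cancel' _ h)⟩

-- The coefficient vectors `(c_0, …, c_{b-1})` of the family `𝓕`.
noncomputable def windowCoeffs (b kp km : ℕ) : Finset (Fin b → ℤ) :=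
  Fintype.piFinset fun t =>
    if t.val = 0 then (Icc (-(km : ℤ)) kp).erase 0 else Icc (-(km : ℤ)) kp

lemma mem_windowCoeffs {b kp km : ℕ} (hb : 0 < b) {c : Fin b → ℤ} :
    c ∈ windowCoeffs b kp km ↔ (∀ t, -(km : ℤ) ≤ c t ∧ c t ≤ kp) ∧ c ⟨0, hb⟩ ≠ 0 := by
  simp only [windowCoeffs, Fintype.mem_piFinset]
  constructor
  · intro h
    refine ⟨fun t => ?_, ?_⟩
    · have ht := h t
      split_ifs at ht <;> simp_all
    · have h0 := h ⟨0, hb⟩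
      rw [if_pos rfl, mem_erase] at h0
      exact h0.1
  · rintro ⟨hbd, h0⟩ t
    split_ifs with ht
    · obtain rfl : t = ⟨0, hb⟩ := Fin.ext ht
      simpa [h0] using hbd _
    · simpa using hbd t

lemma card_windowCoeffs {b kp km : ℕ} (hb : 0 < b) :
    #(windowCoeffs b kp km) = (kp + km) * (kp + km + 1) ^ (b - 1) := by
  obtain ⟨m, rfl⟩ := Nat.exists_eq_add_of_lt hb
  have hIcc : #(Icc (-(km : ℤ)) kp) = kp + km + 1 := by
    rw [Int.card_Icc]
    omega
  simp [windowCoeffs, Fintype.card_piFinset, Fin.prod_univ_succ, card_erase_of_mem, hIcc]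

section CyclicWindow

variable {n b : ℕ}

-- `c` placed at the cyclic positions `i, …, i + b - 1`; entries that land on the same position
-- (possible only when `b > n`) are added.
def cyclicWindow (i : ZMod n) (c : Fin b → ℤ) : Fin n → ℤ :=
  fun ℓ => ∑ t : Fin b, if (ℓ.val : ZMod n) = i + (t.val : ZMod n) then c t else 0

lemma Fin.natCast_val_eq_iff_eq_mk_val [NeZero n] {ℓ : Fin n} {u : ZMod n} :
    ((ℓ : ℕ) : ZMod n) = u ↔ ℓ = ⟨u.val, u.val_lt⟩ := by
  constructor
  · rintro rfl
    ext
    exact (ZMod.val_natCast_of_lt ℓ.isLt).symm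
  · rintro rfl
    exact ZMod.natCast_zmod_val u

lemma sum_cyclicWindow_smul_pow {R : Type*} [CommRing R] [NeZero n] {β : R} (hβ : β ^ n = 1)
    (i : ZMod n) (c : Fin b → ℤ) :
    ∑ ℓ : Fin n, cyclicWindow i c ℓ • β ^ (ℓ : ℕ) =
      β ^ i.val * ∑ t : Fin b, (c t : R) * β ^ (t : ℕ) := by
  have hpow (t : Fin b) : β ^ (i + (t.val : ZMod n)).val = β ^ i.val * β ^ (t : ℕ) := by
    rw [← pow_add, pow_eq_pow_mod _ hβ, pow_eq_pow_mod (i.val + t) hβ, ZMod.val_add,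
      ZMod.val_natCast, Nat.add_mod_mod, Nat.mod_mod]
  simp only [cyclicWindow, Finset.sum_smul, ite_smul, zero_smul, Fin.natCast_val_eq_iff_eq_mk_val]
  rw [Finset.sum_comm, Finset.mul_sum]
  refine Finset.sum_congr rfl fun t _ => ?_
  rw [Finset.sum_ite_eq', if_pos (mem_univ _), hpow, zsmul_eq_mul]
  ring

lemma eq_cyclicWindow [NeZero n] (hbn : b ≤ n) {x : Fin n → ℤ} {i : ZMod n}
    (hx : ∀ ℓ : Fin n, (∀ j < b, (ℓ.val : ZMod n) ≠ i + j) → x ℓ = 0) :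
    x = cyclicWindow i (fun t : Fin b => x ⟨(i + (t.val : ZMod n)).val, ZMod.val_lt _⟩) := by
  funext ℓ
  by_cases hℓ : ∃ j < b, (ℓ.val : ZMod n) = i + j
  · obtain ⟨j, hj, hℓj⟩ := hℓ
    rw [cyclicWindow, Finset.sum_eq_single ⟨j, hj⟩, if_pos hℓj,
      ← Fin.natCast_val_eq_iff_eq_mk_val.mp hℓj]
    · intro t _ htj
      refine if_neg fun h => htj (Fin.ext ?_)
      rw [hℓj, add_right_inj, ZMod.natCast_eq_natCast_iff] at h
      exact (h.eq_of_lt_of_lt (hj.trans_le hbn) (t.isLt.trans_le hbn)).symm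
    · simp
  · push Not at hℓ
    rw [hx ℓ hℓ, cyclicWindow, Finset.sum_eq_zero fun t _ => if_neg (hℓ t.val t.isLt)]

lemma exists_window_start_ne_zero [NeZero n] {x : Fin n → ℤ} {i₀ : ZMod n}
    (hx : ∀ ℓ : Fin n, (∀ j < b, (ℓ.val : ZMod n) ≠ i₀ + j) → x ℓ = 0) (hx0 : x ≠ 0) :
    ∃ i : ZMod n, (∀ ℓ : Fin n, (∀ j < b, (ℓ.val : ZMod n) ≠ i + j) → x ℓ = 0) ∧
      x ⟨i.val, i.val_lt⟩ ≠ 0 := by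
  have hsupp (ℓ : Fin n) (hℓ : x ℓ ≠ 0) : ∃ j < b, (ℓ.val : ZMod n) = i₀ + j := by
    by_contra h
    push Not at h
    exact hℓ (hx ℓ h)
  have hQ : ∃ j, j < b ∧ x ⟨(i₀ + j).val, ZMod.val_lt _⟩ ≠ 0 := by
    obtain ⟨ℓ, hℓ⟩ := Function.ne_iff.mp hx0
    obtain ⟨j, hj, hℓj⟩ := hsupp ℓ hℓ
    exact ⟨j, hj, Fin.natCast_val_eq_iff_eq_mk_val.mp hℓj ▸ hℓ⟩
  refine ⟨i₀ + Nat.find hQ, fun ℓ hℓ => ?_, (Nat.find_spec hQ).2⟩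
  by_contra hxℓ
  obtain ⟨j, hj, hℓj⟩ := hsupp ℓ hxℓ
  have hle : Nat.find hQ ≤ j :=
    Nat.find_min' hQ ⟨hj, Fin.natCast_val_eq_iff_eq_mk_val.mp hℓj ▸ hxℓ⟩
  refine hℓ (j - Nat.find hQ) (by omega) ?_
  rw [hℓj, add_assoc, ← Nat.cast_add, Nat.add_sub_cancel' hle]

lemma eq_zero_or_eq_cyclicWindow [NeZero n] (hbn : b ≤ n) {kp km : ℕ} {x : Fin n → ℤ}
    (hx : x ∈ cyclicBall n b kp km) :
    x = 0 ∨ ∃ i, ∃ c ∈ windowCoeffs b kp km, x = cyclicWindow i c := by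
  obtain ⟨hbd, i₀, hwin⟩ := hx
  refine or_iff_not_imp_left.mpr fun hx0 => ?_
  obtain ⟨i, hwin, hxi⟩ := exists_window_start_ne_zero hwin hx0
  have hb : 0 < b := Nat.pos_of_ne_zero fun h => hx0 (funext fun ℓ => hwin ℓ (by simp [h]))
  refine ⟨i, _, (mem_windowCoeffs hb).mpr ⟨fun t => hbd _, ?_⟩, eq_cyclicWindow hbn hwin⟩
  simpa using hxi

end CyclicWindow

theorem splits_cyclicBall {R : Type*} [CommRing R] {b kp km e n : ℕ} [NeZero e] [NeZero n]
    (hbn : b ≤ n) {α : R} (hα : orderOf α = e * n) (hcard : #(windowCoeffs b kp km) ≤ e)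
    (hP0 : ∀ c ∈ windowCoeffs b kp km, ∑ t : Fin b, (c t : R) * α ^ (e * (t : ℕ)) ≠ 0)
    (hlog : ∀ r < e, ∃ c ∈ windowCoeffs b kp km, ∃ a, a % e = r ∧
      α ^ a = ∑ t : Fin b, (c t : R) * α ^ (e * (t : ℕ))) :
    Splits (cyclicBall n b kp km) (fun ℓ : Fin n => α ^ (e * (ℓ : ℕ))) := by
  set P : (Fin b → ℤ) → R := fun c => ∑ t : Fin b, (c t : R) * α ^ (e * (t : ℕ))
  have hsum (i : ZMod n) (c : Fin b → ℤ) :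
      ∑ ℓ : Fin n, cyclicWindow i c ℓ • α ^ (e * (ℓ : ℕ)) = α ^ (e * i.val) * P c := by
    simpa only [← pow_mul] using
      sum_cyclicWindow_smul_pow (β := α ^ e) (by rw [← pow_mul, ← hα, pow_orderOf_eq_one]) i c
  have hne (i : ZMod n) (c : Fin b → ℤ) (hc : c ∈ windowCoeffs b kp km) :
      α ^ (e * i.val) * P c ≠ 0 := by
    have hunit : IsUnit α := (orderOf_pos_iff.mp (hα ▸ Nat.pos_of_neZero _)).isUnit
    rw [Ne, (hunit.pow _).mul_right_eq_zero]
    exact hP0 c hc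
  intro x hx y hy hxy
  dsimp only at hxy
  rcases eq_zero_or_eq_cyclicWindow hbn hx with rfl | ⟨i, c, hc, rfl⟩ <;>
    rcases eq_zero_or_eq_cyclicWindow hbn hy with rfl | ⟨j, d, hd, rfl⟩
  · rfl
  · simp only [Pi.zero_apply, zero_smul, sum_const_zero, hsum] at hxy
    exact (hne j d hd hxy.symm).elim
  · simp only [Pi.zero_apply, zero_smul, sum_const_zero, hsum] at hxy
    exact (hne i c hc hxy).elim
  · rw [hsum, hsum] at hxy
    obtain ⟨rfl, hij⟩ := eq_and_modEq_of_pow_mul_eq_pow_mul hα hcard hlog hc hd hxy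
    rw [ZMod.val_injective n (hij.eq_of_lt_of_lt i.val_lt j.val_lt)]

theorem stmt10_general (F : Type*) [Field F] [Fintype F] (b kp km e n : ℕ)
    (hb : 1 ≤ b)
    (he : e = (kp + km) * (kp + km + 1) ^ (b - 1))
    (hdvd : e ∣ Fintype.card F - 1)
    (hn : n = (Fintype.card F - 1) / e)
    (hn2 : 2 * b - 1 ≤ n)
    (α : F) (hα : orderOf α = Fintype.card F - 1)
    (hF0 : ∀ c : Fin b → ℤ, (∀ i, -(km : ℤ) ≤ c i ∧ c i ≤ (kp : ℤ)) → c ⟨0, hb⟩ ≠ 0 →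
      (∑ i : Fin b, (c i : F) * α ^ (e * (i : ℕ))) ≠ 0)
    (hlog : ∀ r < e, ∃ c : Fin b → ℤ, (∀ i, -(km : ℤ) ≤ c i ∧ c i ≤ (kp : ℤ)) ∧
      c ⟨0, hb⟩ ≠ 0 ∧ ∃ a : ℕ, a % e = r ∧
        α ^ a = ∑ i : Fin b, (c i : F) * α ^ (e * (i : ℕ))) :
    Splits (cyclicBall n b kp km) (fun i : Fin n => α ^ (e * (i : ℕ))) := by
  have hαen : orderOf α = e * n := by rw [hα, hn, Nat.mul_div_cancel' hdvd]
  have hen : e * n ≠ 0 := hαen ▸ hα ▸ (Nat.sub_pos_of_lt Fintype.one_lt_card).ne'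
  have : NeZero e := ⟨left_ne_zero_of_mul hen⟩
  have : NeZero n := ⟨right_ne_zero_of_mul hen⟩
  refine splits_cyclicBall (by omega) hαen (by rw [card_windowCoeffs hb, he])
    (fun c hc => ((mem_windowCoeffs hb).mp hc).elim (hF0 c)) fun r hr => ?_
  obtain ⟨c, hbd, hc0, hpow⟩ := hlog r hr
  exact ⟨c, (mem_windowCoeffs hb).mpr ⟨hbd, hc0⟩, hpow⟩

/-- The generic field construction: let `e = (k₊+k₋)(k₊+k₋+1)^{b−1}` divide `q−1`,
`n = (q−1)/e ≥ 2b−1`, and let `α` be a primitive element of `𝔽_q` such that all elements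
`f(α) = Σ_{i<b} cᵢ α^{ie}` (with `cᵢ ∈ [−k₋,k₊]`, `c₀ ≠ 0`) are nonzero and their discrete
logarithms attain all residues modulo `e`.  Then `E°(n,b,k₊,k₋)` splits the additive group
of `𝔽_q` with the splitting sequence `(α⁰, α^e, …, α^{(n−1)e})`. -/
theorem stmt10 (F : Type*) [Field F] [Fintype F] (b kp km e n : ℕ)
    (hb : 1 ≤ b) (hkm : km ≤ kp)
    (he : e = (kp + km) * (kp + km + 1) ^ (b - 1))
    (hdvd : e ∣ Fintype.card F - 1)
    (hn : n = (Fintype.card F - 1) / e)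
    (hn2 : 2 * b - 1 ≤ n)
    (α : F) (hα : orderOf α = Fintype.card F - 1)
    (hF0 : ∀ c : Fin b → ℤ, (∀ i, -(km : ℤ) ≤ c i ∧ c i ≤ (kp : ℤ)) → c ⟨0, hb⟩ ≠ 0 →
      (∑ i : Fin b, (c i : F) * α ^ (e * (i : ℕ))) ≠ 0)
    (hlog : ∀ r < e, ∃ c : Fin b → ℤ, (∀ i, -(km : ℤ) ≤ c i ∧ c i ≤ (kp : ℤ)) ∧
      c ⟨0, hb⟩ ≠ 0 ∧ ∃ a : ℕ, a % e = r ∧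
        α ^ a = ∑ i : Fin b, (c i : F) * α ^ (e * (i : ℕ))) :
    Splits (cyclicBall n b kp km) (fun i : Fin n => α ^ (e * (i : ℕ))) :=
  stmt10_general F b kp km e n hb he hdvd hn hn2 α hα hF0 hlog
end

section
/- Let q = 12m+1 be a prime power with m odd, let n = 2m with n ≥ 3, and let α be a primitive element of 𝔽_q. Define r_α ∈ (𝔽_q)^n by r_{2j+1} = α^{12j} and r_{2j+2} = α^{12j+3} for 0 ≤ j ≤ m−1, and let 𝓕 = {±1, ±x^3, ±(1+x^3), ±(1−x^3), ±(x^3+x^{12}), ±(x^3−x^{12})} (twelve polynomials over 𝔽_q). Suppose f(α) ≠ 0 for all f ∈ 𝓕 and that {log_α(f(α)) mod 12 : f ∈ 𝓕} = {0, 1, 2, …, 11}. Then the cyclic error ball E°(n,2,1,1) splits the additive group of 𝔽_q with splitting sequence r_α. -/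
theorem exists_pow_eq_of_orderOf_eq_card_sub_one {F : Type*} [Field F] [Fintype F] {α : F}
    (hα : orderOf α = Fintype.card F - 1) {z : F} (hz : z ≠ 0) : ∃ a, α ^ a = z := by
  have : NeZero (Fintype.card F - 1) := ⟨by have := Fintype.one_lt_card (α := F); omega⟩
  obtain ⟨a, -, ha⟩ := (hα ▸ IsPrimitiveRoot.orderOf α).eq_pow_of_pow_eq_one
    (FiniteField.pow_card_sub_one_eq_one z hz)
  exact ⟨a, ha⟩

theorem IsOfFinOrder.eq_of_pow_mul_eq_pow_mul {M : Type*} [Monoid M] {ζ : M} (hζ : IsOfFinOrder ζ)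
    {k m : ℕ} (hord : orderOf ζ = k * m) {v : Fin k → M} (hv : ∀ i, ∃ a, ζ ^ a = v i)
    (hres : ∀ r < k, ∃ i a, a % k = r ∧ ζ ^ a = v i) {j j' : ℕ} {i i' : Fin k}
    (hj : j < m) (hj' : j' < m) (h : ζ ^ (k * j) * v i = ζ ^ (k * j') * v i') :
    j = j' ∧ i = i' := by
  choose c hc using hv
  have hmodEq {a b : ℕ} (hab : ζ ^ a = ζ ^ b) : a ≡ b [MOD k * m] :=
    hord ▸ hζ.pow_eq_pow_iff_modEq.1 hab
  have hres_inj : Function.Injective fun i : Fin k => (⟨c i % k, Nat.mod_lt _ i.pos⟩ : Fin k) := by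
    refine Finite.injective_iff_surjective.2 fun r => ?_
    obtain ⟨i, a, har, ha⟩ := hres r r.isLt
    exact ⟨i, Fin.ext (har ▸ ((hmodEq (ha.trans (hc i).symm)).of_mul_right m).symm)⟩
  rw [← hc, ← hc, ← pow_add, ← pow_add] at h
  have hsum := hmodEq h
  obtain rfl : i = i' := hres_inj <| Fin.ext <| by
    simpa [Nat.ModEq, Nat.mul_add_mod] using hsum.of_mul_right m
  have hjj : j ≡ j' [MOD m] := (hsum.add_right_cancel' _).mul_left_cancel' i.pos.ne'
  exact ⟨hjj.eq_of_lt_of_lt hj hj', rfl⟩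

theorem Fin.val_add_one_eq_ite {n : ℕ} [NeZero n] (p : Fin n) :
    ((p + 1 : Fin n) : ℕ) = if (p : ℕ) + 1 = n then 0 else (p : ℕ) + 1 := by
  rw [Fin.val_add, Fin.val_one', Nat.add_mod_mod]
  split_ifs with h
  · rw [h, Nat.mod_self]
  · exact Nat.mod_eq_of_lt (by omega)

section CyclicBall

variable {n : ℕ} [NeZero n]

def windowVec (p : Fin n) (a b : ℤ) : Fin n → ℤ := Pi.single p a + Pi.single (p + 1) b

theorem sum_windowVec_smul {G : Type*} [AddCommGroup G] (p : Fin n) (a b : ℤ) (s : Fin n → G) :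
    ∑ t, windowVec p a b t • s t = a • s p + b • s (p + 1) := by
  simp [windowVec, add_smul, Finset.sum_add_distrib, Pi.single_apply, ite_smul]

theorem exists_window_of_mem_cyclicBall {e : Fin n → ℤ} (he : e ∈ cyclicBall n 2 1 1) :
    ∃ p : Fin n, ∀ ℓ, ℓ ≠ p → ℓ ≠ p + 1 → e ℓ = 0 := by
  obtain ⟨-, i, hi⟩ := he
  refine ⟨⟨i.val, i.val_lt⟩, fun ℓ h₀ h₁ => hi ℓ fun j hj hℓ => ?_⟩
  have hval := congrArg ZMod.val hℓ
  rw [ZMod.val_add, ZMod.val_natCast, ZMod.val_natCast, Nat.mod_eq_of_lt ℓ.isLt] at hval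
  interval_cases j
  · exact h₀ (Fin.ext (by simpa [Nat.mod_eq_of_lt i.val_lt] using hval))
  · exact h₁ (Fin.ext (by simpa [Fin.val_add, Fin.val_one'] using hval))

theorem eq_zero_or_eq_windowVec_of_mem_cyclicBall (hn : 1 < n) {e : Fin n → ℤ}
    (he : e ∈ cyclicBall n 2 1 1) :
    e = 0 ∨ ∃ p a b, (a = 1 ∨ a = -1) ∧ (b = -1 ∨ b = 0 ∨ b = 1) ∧ e = windowVec p a b := by
  have hbound : ∀ ℓ, -1 ≤ e ℓ ∧ e ℓ ≤ 1 := by simpa using he.1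
  obtain ⟨p, hp⟩ := exists_window_of_mem_cyclicBall he
  have hp1 : p ≠ p + 1 := by
    rw [Ne, left_eq_add, ← Fin.val_inj, Fin.val_one', Fin.val_zero, Nat.mod_eq_of_lt hn]
    exact one_ne_zero
  have hsupp : e = windowVec p (e p) (e (p + 1)) := funext fun ℓ => by
    by_cases h₀ : ℓ = p
    · subst h₀; simp [windowVec, hp1.symm]
    by_cases h₁ : ℓ = p + 1
    · subst h₁; simp [windowVec, hp1.symm]
    · simp [windowVec, h₀, h₁, hp ℓ h₀ h₁]
  by_cases hep : e p = 0
  · by_cases hep1 : e (p + 1) = 0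
    · left; simpa [windowVec, hep, hep1] using hsupp
    · refine .inr ⟨p + 1, e (p + 1), 0, by grind, by simp, ?_⟩
      simpa [windowVec, hep] using hsupp
  · exact .inr ⟨p, e p, e (p + 1), by grind, by grind, hsupp⟩

end CyclicBall

section InterleavedPowers

variable {M : Type*} [Monoid M]

def interleavedPowers (α : M) (k d m : ℕ) : Fin (2 * m) → M := fun t =>
  if t.val % 2 = 0 then α ^ (k * (t.val / 2)) else α ^ (k * (t.val / 2) + d)

variable {α : M} {k d m j : ℕ} {p : Fin (2 * m)}

theorem interleavedPowers_of_val_eq_two_mul (hp : (p : ℕ) = 2 * j) :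
    interleavedPowers α k d m p = α ^ (k * j) := by
  simp [interleavedPowers, hp]

theorem interleavedPowers_of_val_eq_two_mul_add_one (hp : (p : ℕ) = 2 * j + 1) :
    interleavedPowers α k d m p = α ^ (k * j) * α ^ d := by
  simp [interleavedPowers, hp, pow_add, Nat.add_mod, Nat.add_div]

variable [NeZero m]

theorem interleavedPowers_add_one_of_val_eq_two_mul (hp : (p : ℕ) = 2 * j) :
    interleavedPowers α k d m (p + 1) = α ^ (k * j) * α ^ d :=
  interleavedPowers_of_val_eq_two_mul_add_one <| by
    rw [Fin.val_add_one_eq_ite]; split_ifs <;> omega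

theorem interleavedPowers_add_one_of_val_eq_two_mul_add_one (hα : α ^ (k * m) = 1)
    (hp : (p : ℕ) = 2 * j + 1) :
    interleavedPowers α k d m (p + 1) = α ^ (k * j) * α ^ k := by
  by_cases hj : j + 1 = m
  · have hp1 : ((p + 1 : Fin (2 * m)) : ℕ) = 2 * 0 := by
      rw [Fin.val_add_one_eq_ite, if_pos (by omega)]
    rw [interleavedPowers_of_val_eq_two_mul hp1, ← pow_add, ← mul_add_one, hj, hα, mul_zero,
      pow_zero]
  · have hp1 : ((p + 1 : Fin (2 * m)) : ℕ) = 2 * (j + 1) := by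
      rw [Fin.val_add_one_eq_ite, if_neg (by omega)]; omega
    rw [interleavedPowers_of_val_eq_two_mul hp1, mul_add_one, pow_add]

end InterleavedPowers

-- Entry `i` is the offset `ε` and the coefficients `(a, b)` of the window at `2j + ε` whose
-- syndrome is `α ^ (12 * j)` times the `i`-th of the twelve values (`sum_patternWindow_smul`).
def windowPattern : Fin 12 → Fin 2 × ℤ × ℤ :=
  ![(0, 1, 0), (0, -1, 0), (1, 1, 0), (1, -1, 0), (0, 1, 1), (0, -1, -1),
    (0, 1, -1), (0, -1, 1), (1, 1, 1), (1, -1, -1), (1, 1, -1), (1, -1, 1)]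

theorem exists_windowPattern_eq (par : Fin 2) {a b : ℤ} (ha : a = 1 ∨ a = -1)
    (hb : b = -1 ∨ b = 0 ∨ b = 1) : ∃ i, windowPattern i = (par, a, b) := by
  rcases ha with rfl | rfl <;> rcases hb with rfl | rfl | rfl <;> fin_cases par <;> decide

def patternWindow {m : ℕ} [NeZero m] (j : Fin m) (i : Fin 12) : Fin (2 * m) → ℤ :=
  windowVec ⟨2 * j + (windowPattern i).1, by omega⟩ (windowPattern i).2.1 (windowPattern i).2.2

theorem eq_zero_or_exists_patternWindow {m : ℕ} [NeZero m] {e : Fin (2 * m) → ℤ}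
    (he : e ∈ cyclicBall (2 * m) 2 1 1) : e = 0 ∨ ∃ j i, e = patternWindow j i := by
  rcases eq_zero_or_eq_windowVec_of_mem_cyclicBall (by have := NeZero.pos m; omega) he with
    h | ⟨p, a, b, ha, hb, rfl⟩
  · exact .inl h
  obtain ⟨i, hi⟩ := exists_windowPattern_eq ⟨p % 2, Nat.mod_lt _ two_pos⟩ ha hb
  refine .inr ⟨⟨p / 2, by omega⟩, i, ?_⟩
  simp only [patternWindow, hi]
  congr
  exact Fin.ext (Nat.div_add_mod p 2).symm

theorem sum_patternWindow_smul {R : Type*} [CommRing R] {α : R} {m : ℕ} [NeZero m]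
    (hα : α ^ (12 * m) = 1) (j : Fin m) (i : Fin 12) :
    ∑ t, patternWindow j i t • interleavedPowers α 12 3 m t =
      α ^ (12 * (j : ℕ)) * ![1, -1, α ^ 3, -(α ^ 3), 1 + α ^ 3, -(1 + α ^ 3),
        1 - α ^ 3, -(1 - α ^ 3), α ^ 3 + α ^ 12, -(α ^ 3 + α ^ 12),
        α ^ 3 - α ^ 12, -(α ^ 3 - α ^ 12)] i := by
  rw [patternWindow, sum_windowVec_smul]
  fin_cases i <;>
    simp [windowPattern, interleavedPowers_of_val_eq_two_mul,
      interleavedPowers_add_one_of_val_eq_two_mul, interleavedPowers_of_val_eq_two_mul_add_one,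
      interleavedPowers_add_one_of_val_eq_two_mul_add_one hα] <;> ring

theorem stmt17_general (F : Type*) [Field F] [Fintype F] (m : ℕ)
    (hq : Fintype.card F = 12 * m + 1) (hn : 3 ≤ 2 * m)
    (α : F) (hα : orderOf α = Fintype.card F - 1)
    (vals : Fin 12 → F)
    (hvals : vals = ![1, -1, α ^ 3, -(α ^ 3), 1 + α ^ 3, -(1 + α ^ 3),
      1 - α ^ 3, -(1 - α ^ 3), α ^ 3 + α ^ 12, -(α ^ 3 + α ^ 12),
      α ^ 3 - α ^ 12, -(α ^ 3 - α ^ 12)])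
    (hne : ∀ i, vals i ≠ 0)
    (hlog : ∀ r < 12, ∃ i : Fin 12, ∃ a : ℕ, a % 12 = r ∧ α ^ a = vals i) :
    Splits (cyclicBall (2 * m) 2 1 1)
      (fun t : Fin (2 * m) =>
        if t.val % 2 = 0 then α ^ (12 * (t.val / 2))
        else α ^ (12 * (t.val / 2) + 3)) := by
  have : NeZero m := ⟨by omega⟩
  have hord : orderOf α = 12 * m := by omega
  have hfin : IsOfFinOrder α := orderOf_pos_iff.1 (by omega)
  have hsum (j : Fin m) (i : Fin 12) :
      ∑ t, patternWindow j i t • interleavedPowers α 12 3 m t = α ^ (12 * (j : ℕ)) * vals i :=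
    hvals ▸ sum_patternWindow_smul (hord ▸ pow_orderOf_eq_one α) j i
  have hsum_ne (j : Fin m) (i : Fin 12) : α ^ (12 * (j : ℕ)) * vals i ≠ 0 :=
    mul_ne_zero (pow_ne_zero _ hfin.isUnit.ne_zero) (hne i)
  change Set.InjOn (fun e : Fin (2 * m) → ℤ => ∑ t, e t • interleavedPowers α 12 3 m t) _
  intro e he e' he' hee'
  rcases eq_zero_or_exists_patternWindow he with rfl | ⟨j, i, rfl⟩ <;>
    rcases eq_zero_or_exists_patternWindow he' with rfl | ⟨j', i', rfl⟩
  · rfl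
  · simp only [Pi.zero_apply, zero_smul, Finset.sum_const_zero, hsum] at hee'
    exact absurd hee'.symm (hsum_ne j' i')
  · simp only [Pi.zero_apply, zero_smul, Finset.sum_const_zero, hsum] at hee'
    exact absurd hee' (hsum_ne j i)
  · simp only [hsum] at hee'
    obtain ⟨hj, rfl⟩ := hfin.eq_of_pow_mul_eq_pow_mul hord
      (fun i => exists_pow_eq_of_orderOf_eq_card_sub_one hα (hne i)) hlog j.isLt j'.isLt hee'
    rw [Fin.ext hj]

/-- Modified construction: let `q = 12m+1` be a prime power with `m` odd, `n = 2m ≥ 3`,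
and `α` a primitive element of `𝔽_q`.  Consider the twelve values
`±1, ±α³, ±(1+α³), ±(1−α³), ±(α³+α¹²), ±(α³−α¹²)`; if all are nonzero and their discrete
logarithms attain all residues modulo `12`, then `E°(n,2,1,1)` splits the additive group
of `𝔽_q` with the splitting sequence `r_α = (1, α³, α¹², α¹⁵, …, α^{12(m−1)}, α^{12(m−1)+3})`. -/
theorem stmt17 (F : Type*) [Field F] [Fintype F] (m : ℕ) (hmo : Odd m)
    (hq : Fintype.card F = 12 * m + 1) (hn : 3 ≤ 2 * m)
    (α : F) (hα : orderOf α = Fintype.card F - 1)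
    (vals : Fin 12 → F)
    (hvals : vals = ![1, -1, α ^ 3, -(α ^ 3), 1 + α ^ 3, -(1 + α ^ 3),
      1 - α ^ 3, -(1 - α ^ 3), α ^ 3 + α ^ 12, -(α ^ 3 + α ^ 12),
      α ^ 3 - α ^ 12, -(α ^ 3 - α ^ 12)])
    (hne : ∀ i, vals i ≠ 0)
    (hlog : ∀ r < 12, ∃ i : Fin 12, ∃ a : ℕ, a % 12 = r ∧ α ^ a = vals i) :
    Splits (cyclicBall (2 * m) 2 1 1)
      (fun t : Fin (2 * m) =>
        if t.val % 2 = 0 then α ^ (12 * (t.val / 2))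
        else α ^ (12 * (t.val / 2) + 3)) :=
  stmt17_general F m hq hn α hα vals hvals hne hlog
end
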